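/- Let c⁻, c⁺ > 0. There exists a constant C > 0, depending only on c⁻ and c⁺, with the following property. For every Δx > 0, every x_{j−1} ∈ ℝ with x_j = x_{j−1} + Δx, every α ∈ [x_{j−1}, x_j], every M ≥ 0, and every pair of four times continuously differentiable functions u⁻, u⁺ : ℝ → ℝ satisfying |d⁴u⁻/dx⁴| ≤ M and |d⁴u⁺/dx⁴| ≤ M on [x_{j−1}, x_j] and the interface relations u⁻(α) = u⁺(α), c⁻·u⁻'(α) = c⁺·u⁺'(α), (c⁻)²·u⁻''(α) = (c⁺)²·u⁺''(α), (c⁻)³·u⁻'''(α) = (c⁺)³·u⁺'''(α): if a₀, a₁, a₂, a₃ ∈ ℝ are such that the polynomials h⁻(x) = Σ_{ℓ=0}^{3} (a_ℓ/ℓ!)·((x−α)/(c⁻·Δx))^ℓ and h⁺(x) = Σ_{ℓ=0}^{3} (a_ℓ/ℓ!)·((x−α)/(c⁺·Δx))^ℓ satisfy h⁻(x_{j−1}) = u⁻(x_{j−1}), h⁻'(x_{j−1}) = u⁻'(x_{j−1}), h⁺(x_j) = u⁺(x_j), h⁺'(x_j) = u⁺'(x_j), then for all x ∈ [x_{j−1},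 α]: |u⁻(x) − h⁻(x)| ≤ C·M·(Δx)⁴ and |u⁻'(x) − h⁻'(x)| ≤ C·M·(Δx)³, and for all x ∈ [α, x_j]: |u⁺(x) − h⁺(x)| ≤ C·M·(Δx)⁴ and |u⁺'(x) − h⁺'(x)| ≤ C·M·(Δx)³. -/

import Mathlib

/-!
The interface relations say exactly that the scaled Taylor coefficients `s^ℓ u^{(ℓ)}(α)` of
`u⁻` with `s = c⁻Δx` and of `u⁺` with `s = c⁺Δx` coincide, so on both sides the Taylor cubic of
`u±` at `α` is `iimCubic b α (c±Δx)` with one and the same `b`. Hence on each side `u± - h±` is,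
up to a Taylor remainder `O(M Δx⁴)`, the single normalized cubic `p = iimCubic (b - a) 0 1`
evaluated at `(x - α) / (c±Δx)`. The interpolation conditions make `p` and `p'` of size
`O(M Δx⁴)` at the nodes `t₁ = (x_{j-1} - α) / (c⁻Δx) ≤ 0 ≤ t₂ = (x_j - α) / (c⁺Δx)`; these lie in
`[-K, K]` with `K = max (1/c⁻) (1/c⁺)` and are at least `min (1/c⁻) (1/c⁺)` apart, and a cubic
with small Hermite data at two such nodes is small, with its derivative, on all of `[-K, K]`.
-/

/-- The cubic `x ↦ Σ_{ℓ=0}^{3} (a_ℓ/ℓ!)·((x−α)/s)^ℓ`; with `s = c±·Δx` these are the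
two pieces of the immersed interface cubic polynomial. -/
noncomputable def iimCubic (a₀ a₁ a₂ a₃ α s : ℝ) : ℝ → ℝ :=
  fun x => a₀ + a₁ * ((x - α) / s) + a₂ / 2 * ((x - α) / s)^2 + a₃ / 6 * ((x - α) / s)^3

open Set Finset Nat

theorem abs_sub_sum_taylor_le {f : ℝ → ℝ} {n : ℕ} (hf : ContDiff ℝ (n + 1) f) {x₀ x M : ℝ}
    (hM : ∀ y ∈ uIcc x₀ x, |iteratedDeriv (n + 1) f y| ≤ M) :
    |f x - ∑ k ∈ range (n + 1), iteratedDeriv k f x₀ / k ! * (x - x₀) ^ k| ≤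
      M * |x - x₀| ^ (n + 1) / (n + 1)! := by
  rcases eq_or_ne x₀ x with rfl | hx
  · simp [Finset.sum_range_succ']
  obtain ⟨y, hy, hrem⟩ := taylor_mean_remainder_lagrange_iteratedDeriv hx hf.contDiffOn
  have htaylor : taylorWithinEval f n (uIcc x₀ x) x₀ x =
      ∑ k ∈ range (n + 1), iteratedDeriv k f x₀ / k ! * (x - x₀) ^ k := by
    rw [taylor_within_apply]
    refine Finset.sum_congr rfl fun k hk => ?_
    rw [iteratedDerivWithin_eq_iteratedDeriv (uniqueDiffOn_uIcc hx)
      ((hf.of_le (by exact_mod_cast (mem_range.1 hk).le)).contDiffAt) left_mem_uIcc, smul_eq_mul]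
    ring
  rw [← htaylor, hrem, abs_div, abs_mul, abs_pow, abs_of_pos (by positivity : (0 : ℝ) < (n + 1)!)]
  gcongr
  exact hM y (uIoo_subset_uIcc_self hy)

theorem hasDerivAt_iimCubic (a₀ a₁ a₂ a₃ α s x : ℝ) :
    HasDerivAt (iimCubic a₀ a₁ a₂ a₃ α s)
      ((a₁ + a₂ * ((x - α) / s) + a₃ / 2 * ((x - α) / s) ^ 2) / s) x := by
  have ht : HasDerivAt (fun x : ℝ => (x - α) / s) (1 / s) x := by
    simpa using ((hasDerivAt_id x).sub_const α).div_const s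
  refine ((((ht.const_mul a₁).const_add a₀).add ((ht.pow 2).const_mul (a₂ / 2))).add
    ((ht.pow 3).const_mul (a₃ / 6))).congr_deriv ?_
  push_cast
  ring

theorem iimCubic_zero_one (a₀ a₁ a₂ a₃ t : ℝ) :
    iimCubic a₀ a₁ a₂ a₃ 0 1 t = a₀ + a₁ * t + a₂ / 2 * t ^ 2 + a₃ / 6 * t ^ 3 := by
  simp [iimCubic]

theorem deriv_iimCubic_zero_one (a₀ a₁ a₂ a₃ t : ℝ) :
    deriv (iimCubic a₀ a₁ a₂ a₃ 0 1) t = a₁ + a₂ * t + a₃ / 2 * t ^ 2 := by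
  simp [(hasDerivAt_iimCubic _ _ _ _ _ _ _).deriv]

theorem abs_iimCubic_le_of_hermite_data {a₀ a₁ a₂ a₃ t₁ t₂ t δ K D : ℝ} (hδ : 0 < δ)
    (hgap : δ ≤ t₂ - t₁) (ht₁ : |t₁| ≤ K) (ht₂ : |t₂| ≤ K) (ht : |t| ≤ K)
    (hp₁ : |iimCubic a₀ a₁ a₂ a₃ 0 1 t₁| ≤ D) (hp₁' : |deriv (iimCubic a₀ a₁ a₂ a₃ 0 1) t₁| ≤ D)
    (hp₂ : |iimCubic a₀ a₁ a₂ a₃ 0 1 t₂| ≤ D) (hp₂' : |deriv (iimCubic a₀ a₁ a₂ a₃ 0 1) t₂| ≤ D) :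
    |iimCubic a₀ a₁ a₂ a₃ 0 1 t| ≤ 200 * (K + 1) ^ 4 / δ ^ 3 * D ∧
      |deriv (iimCubic a₀ a₁ a₂ a₃ 0 1) t| ≤ 200 * (K + 1) ^ 4 / δ ^ 3 * D := by
  set p := iimCubic a₀ a₁ a₂ a₃ 0 1
  set h := t₂ - t₁
  set s := t - t₁
  set A := p t₂ - p t₁ - deriv p t₁ * h
  set B := h * (deriv p t₂ - deriv p t₁)
  -- Taylor expansion of `p` at `t₁`: the Hermite data at `t₂` give its quadratic and cubic
  -- coefficients as `(3 A - B) / h²` and `(B - 2 A) / h³`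
  have hval : h ^ 3 * p t = h ^ 3 * p t₁ + h ^ 3 * deriv p t₁ * s + h * (3 * A - B) * s ^ 2
      + (B - 2 * A) * s ^ 3 := by
    simp only [p, A, B, h, s, iimCubic_zero_one, deriv_iimCubic_zero_one]; ring
  have hder : h ^ 3 * deriv p t = h ^ 3 * deriv p t₁ + 2 * h * (3 * A - B) * s
      + 3 * (B - 2 * A) * s ^ 2 := by
    simp only [p, A, B, h, s, iimCubic_zero_one, deriv_iimCubic_zero_one]; ring
  have hD : 0 ≤ D := (abs_nonneg _).trans hp₁
  have hK : 0 ≤ K := (abs_nonneg _).trans ht₁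
  have hh : |h| ≤ 2 * K := by linarith [abs_sub t₂ t₁]
  have hh' : |h| ≤ 2 * (K + 1) := by linarith
  have hs : |s| ≤ 2 * (K + 1) := by linarith [abs_sub t t₁]
  have hA : |A| ≤ 2 * (K + 1) * D := by
    have : |deriv p t₁ * h| ≤ D * (2 * K) := by rw [abs_mul]; gcongr
    calc |A| ≤ |p t₂| + |p t₁| + |deriv p t₁ * h| :=
          (abs_sub _ _).trans (add_le_add_left (abs_sub _ _) _)
      _ ≤ 2 * (K + 1) * D := by nlinarith
  have hB : |B| ≤ 4 * (K + 1) * D := by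
    have : |deriv p t₂ - deriv p t₁| ≤ 2 * D := by linarith [abs_sub (deriv p t₂) (deriv p t₁)]
    calc |B| ≤ 2 * K * (2 * D) := by rw [abs_mul]; gcongr
      _ ≤ 4 * (K + 1) * D := by nlinarith
  have h3AB : |3 * A - B| ≤ 10 * (K + 1) * D := by
    have : |3 * A| = 3 * |A| := by simp [abs_mul]
    linarith [abs_sub (3 * A) B]
  have hBA : |B - 2 * A| ≤ 8 * (K + 1) * D := by
    have : |2 * A| = 2 * |A| := by simp [abs_mul]
    linarith [abs_sub B (2 * A)]
  have hK3 : (K + 1) ^ 3 * D ≤ (K + 1) ^ 4 * D := by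
    gcongr
    · linarith
    · norm_num
  have hK4 : 0 ≤ (K + 1) ^ 4 * D := by positivity
  have hval_le : |h ^ 3 * p t| ≤ 200 * (K + 1) ^ 4 * D := by
    rw [hval]
    refine (abs_add_le _ _).trans ((add_le_add (abs_add_three _ _ _) le_rfl).trans ?_)
    simp only [abs_mul, abs_pow]
    calc _ ≤ (2 * (K + 1)) ^ 3 * D + (2 * (K + 1)) ^ 3 * D * (2 * (K + 1))
          + 2 * (K + 1) * (10 * (K + 1) * D) * (2 * (K + 1)) ^ 2
          + 8 * (K + 1) * D * (2 * (K + 1)) ^ 3 := by gcongr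
      _ ≤ 200 * (K + 1) ^ 4 * D := by linarith
  have hder_le : |h ^ 3 * deriv p t| ≤ 200 * (K + 1) ^ 4 * D := by
    rw [hder]
    refine (abs_add_three _ _ _).trans ?_
    simp only [abs_mul, abs_pow, Nat.abs_ofNat]
    calc _ ≤ (2 * (K + 1)) ^ 3 * D + 2 * (2 * (K + 1)) * (10 * (K + 1) * D) * (2 * (K + 1))
          + 3 * (8 * (K + 1) * D) * (2 * (K + 1)) ^ 2 := by gcongr
      _ ≤ 200 * (K + 1) ^ 4 * D := by linarith
  have hdiv : ∀ y, |h ^ 3 * y| ≤ 200 * (K + 1) ^ 4 * D →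
      |y| ≤ 200 * (K + 1) ^ 4 / δ ^ 3 * D := by
    intro y hy
    rw [div_mul_eq_mul_div, le_div_iff₀ (by positivity)]
    calc |y| * δ ^ 3 ≤ |y| * h ^ 3 := by gcongr
      _ = |h ^ 3 * y| := by rw [abs_mul, abs_pow, abs_of_pos (hδ.trans_le hgap), mul_comm]
      _ ≤ _ := hy
  exact ⟨hdiv _ hval_le, hdiv _ hder_le⟩

theorem abs_div_mul_le_inv {l Δ α x c : ℝ} (hc : 0 < c) (hΔ : 0 < Δ) (hα : α ∈ Icc l (l + Δ))
    (hx : x ∈ Icc l (l + Δ)) : |(x - α) / (c * Δ)| ≤ c⁻¹ := by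
  have hcΔ : 0 < c * Δ := by positivity
  rw [abs_div, abs_of_pos hcΔ, div_le_iff₀ hcΔ]
  calc |x - α| ≤ Δ := by simpa [Real.dist_eq] using Real.dist_le_of_mem_Icc hx hα
    _ = c⁻¹ * (c * Δ) := by field_simp

section OneSide

variable {f : ℝ → ℝ} {l Δ α x s M b₀ b₁ b₂ b₃ a₀ a₁ a₂ a₃ : ℝ}

local notation "errCubic" => iimCubic (b₀ - a₀) (b₁ - a₁) (b₂ - a₂) (b₃ - a₃) 0 1

/-- The hypotheses make `iimCubic b₀ b₁ b₂ b₃ α s` the Taylor cubic of `f` at `α`. -/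
theorem abs_sub_iimCubic_sub_le (hf : ContDiff ℝ 4 f) (hs : s ≠ 0) (h₀ : f α = b₀)
    (h₁ : s * deriv f α = b₁) (h₂ : s ^ 2 * iteratedDeriv 2 f α = b₂)
    (h₃ : s ^ 3 * iteratedDeriv 3 f α = b₃) (hα : α ∈ Icc l (l + Δ))
    (hx : x ∈ Icc l (l + Δ)) (hM : ∀ y ∈ Icc l (l + Δ), |iteratedDeriv 4 f y| ≤ M) :
    |f x - iimCubic a₀ a₁ a₂ a₃ α s x - errCubic ((x - α) / s)| ≤ M * Δ ^ 4 / 24 ∧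
      |deriv f x - deriv (iimCubic a₀ a₁ a₂ a₃ α s) x - deriv errCubic ((x - α) / s) / s| ≤
        M * Δ ^ 3 / 6 := by
  subst h₀ h₁ h₂ h₃
  have hM₀ : 0 ≤ M := (abs_nonneg _).trans (hM α hα)
  have hxα : |x - α| ≤ Δ := by simpa [Real.dist_eq] using Real.dist_le_of_mem_Icc hx hα
  replace hM : ∀ y ∈ uIcc α x, |iteratedDeriv 4 f y| ≤ M :=
    fun y hy => hM y (uIcc_subset_Icc hα hx hy)
  have hval := abs_sub_sum_taylor_le (n := 3) hf hM
  have hder := abs_sub_sum_taylor_le (n := 2) hf.deriv'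
    (by simpa only [← iteratedDeriv_succ'] using hM)
  simp only [Finset.sum_range_succ, Finset.sum_range_zero, ← iteratedDeriv_succ'] at hval hder
  norm_num [Nat.factorial, iteratedDeriv_one] at hval hder
  simp only [(hasDerivAt_iimCubic _ _ _ _ _ _ _).deriv]
  constructor
  · refine le_trans (le_of_eq ?_) (hval.trans (by gcongr))
    congr 1
    simp only [iimCubic]
    field_simp
    ring
  · refine le_trans (le_of_eq ?_) (hder.trans (by gcongr))
    congr 1
    field_simp
    ring

theorem abs_iimCubic_le_of_interpolates (hf : ContDiff ℝ 4 f) (hs : 0 < s) (h₀ : f α = b₀)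
    (h₁ : s * deriv f α = b₁) (h₂ : s ^ 2 * iteratedDeriv 2 f α = b₂)
    (h₃ : s ^ 3 * iteratedDeriv 3 f α = b₃) (hα : α ∈ Icc l (l + Δ))
    (hx : x ∈ Icc l (l + Δ)) (hM : ∀ y ∈ Icc l (l + Δ), |iteratedDeriv 4 f y| ≤ M)
    (hi : iimCubic a₀ a₁ a₂ a₃ α s x = f x) (hi' : deriv (iimCubic a₀ a₁ a₂ a₃ α s) x = deriv f x) :
    |errCubic ((x - α) / s)| ≤ M * Δ ^ 4 / 24 ∧
      |deriv errCubic ((x - α) / s)| ≤ s * (M * Δ ^ 3 / 6) := by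
  obtain ⟨hval, hder⟩ := abs_sub_iimCubic_sub_le (a₀ := a₀) (a₁ := a₁) (a₂ := a₂) (a₃ := a₃)
    hf hs.ne' h₀ h₁ h₂ h₃ hα hx hM
  rw [hi, sub_self, zero_sub, abs_neg] at hval
  rw [hi', sub_self, zero_sub, abs_neg, abs_div, abs_of_pos hs, div_le_iff₀ hs] at hder
  exact ⟨hval, by linarith⟩

theorem abs_sub_iimCubic_le {c K A : ℝ} (hf : ContDiff ℝ 4 f) (hc : 0 < c) (hΔ : 0 < Δ)
    (h₀ : f α = b₀) (h₁ : c * Δ * deriv f α = b₁) (h₂ : (c * Δ) ^ 2 * iteratedDeriv 2 f α = b₂)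
    (h₃ : (c * Δ) ^ 3 * iteratedDeriv 3 f α = b₃) (hα : α ∈ Icc l (l + Δ))
    (hx : x ∈ Icc l (l + Δ)) (hM : ∀ y ∈ Icc l (l + Δ), |iteratedDeriv 4 f y| ≤ M)
    (hcK : c⁻¹ ≤ K) (hA : 0 ≤ A)
    (hp : ∀ t, |t| ≤ K → |errCubic t| ≤ A * (M * Δ ^ 4) ∧ |deriv errCubic t| ≤ A * (M * Δ ^ 4)) :
    |f x - iimCubic a₀ a₁ a₂ a₃ α (c * Δ) x| ≤ (1 + A * (1 + K)) * M * Δ ^ 4 ∧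
      |deriv f x - deriv (iimCubic a₀ a₁ a₂ a₃ α (c * Δ)) x| ≤ (1 + A * (1 + K)) * M * Δ ^ 3 := by
  obtain ⟨hval, hder⟩ := abs_sub_iimCubic_sub_le (a₀ := a₀) (a₁ := a₁) (a₂ := a₂) (a₃ := a₃)
    hf (by positivity) h₀ h₁ h₂ h₃ hα hx hM
  obtain ⟨hp, hp'⟩ := hp _ ((abs_div_mul_le_inv hc hΔ hα hx).trans hcK)
  have hM₀ : 0 ≤ M := (abs_nonneg _).trans (hM α hα)
  have hK : 0 ≤ K := (inv_pos.2 hc).le.trans hcK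
  constructor
  · have : 0 ≤ A * K * (M * Δ ^ 4) := by positivity
    have : 0 ≤ M * Δ ^ 4 := by positivity
    linarith [abs_sub_abs_le_abs_sub (f x - iimCubic a₀ a₁ a₂ a₃ α (c * Δ) x)
      (errCubic ((x - α) / (c * Δ)))]
  · have hslope : |deriv errCubic ((x - α) / (c * Δ)) / (c * Δ)| ≤ A * K * (M * Δ ^ 3) := by
      have hcΔ : 0 < c * Δ := by positivity
      rw [abs_div, abs_of_pos hcΔ, div_le_iff₀ hcΔ]
      calc _ ≤ A * (M * Δ ^ 4) := hp'
        _ = A * c⁻¹ * (M * Δ ^ 3) * (c * Δ) := by field_simp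
        _ ≤ A * K * (M * Δ ^ 3) * (c * Δ) := by gcongr
    have : 0 ≤ A * (M * Δ ^ 3) := by positivity
    have : 0 ≤ M * Δ ^ 3 := by positivity
    linarith [abs_sub_abs_le_abs_sub (deriv f x - deriv (iimCubic a₀ a₁ a₂ a₃ α (c * Δ)) x)
      (deriv errCubic ((x - α) / (c * Δ)) / (c * Δ))]

end OneSide

theorem min_inv_le_sub_div {cm cp Δ l α : ℝ} (hcm : 0 < cm) (hcp : 0 < cp) (hΔ : 0 < Δ)
    (hα : α ∈ Icc l (l + Δ)) :
    min cm⁻¹ cp⁻¹ ≤ (l + Δ - α) / (cp * Δ) - (l - α) / (cm * Δ) := by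
  have e : (l + Δ - α) / (cp * Δ) - (l - α) / (cm * Δ) =
      ((l + Δ - α) * cp⁻¹ + (α - l) * cm⁻¹) / Δ := by
    field_simp
    ring
  rw [e, le_div_iff₀ hΔ]
  nlinarith [min_le_left cm⁻¹ cp⁻¹, min_le_right cm⁻¹ cp⁻¹, hα.1, hα.2]

/-- **Accuracy of the immersed interface cubic polynomial.**
There is a constant `C > 0` depending only on `c⁻, c⁺ > 0` such that: for any cell
`[x_{j−1}, x_j]` of width `Δx` containing the interface `α`, any `C⁴` functions
`u⁻, u⁺` with fourth derivatives bounded by `M` on the cell satisfying the interface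
relations `[u] = [c u_x] = [c² u_xx] = [c³ u_xxx] = 0` at `α`, and any coefficients
`a₀,…,a₃` such that the piecewise cubic `h⁻(x) = Σ (a_ℓ/ℓ!)((x−α)/(c⁻Δx))^ℓ`,
`h⁺(x) = Σ (a_ℓ/ℓ!)((x−α)/(c⁺Δx))^ℓ` interpolates `u⁻, u⁻'` at `x_{j−1}` and
`u⁺, u⁺'` at `x_j`, one has `|u± − h±| ≤ C M Δx⁴` and `|u±' − h±'| ≤ C M Δx³` on the
respective subintervals. -/
theorem stmt_15 (cm cp : ℝ) (hcm : 0 < cm) (hcp : 0 < cp) :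
    ∃ C : ℝ, 0 < C ∧
      ∀ (Δx xjm xj α M : ℝ), 0 < Δx → xj = xjm + Δx → α ∈ Set.Icc xjm xj → 0 ≤ M →
      ∀ um up : ℝ → ℝ, ContDiff ℝ 4 um → ContDiff ℝ 4 up →
      (∀ x ∈ Set.Icc xjm xj, |iteratedDeriv 4 um x| ≤ M) →
      (∀ x ∈ Set.Icc xjm xj, |iteratedDeriv 4 up x| ≤ M) →
      um α = up α →
      cm * deriv um α = cp * deriv up α →
      cm^2 * iteratedDeriv 2 um α = cp^2 * iteratedDeriv 2 up α →
      cm^3 * iteratedDeriv 3 um α = cp^3 * iteratedDeriv 3 up α →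
      ∀ a₀ a₁ a₂ a₃ : ℝ,
      iimCubic a₀ a₁ a₂ a₃ α (cm * Δx) xjm = um xjm →
      deriv (iimCubic a₀ a₁ a₂ a₃ α (cm * Δx)) xjm = deriv um xjm →
      iimCubic a₀ a₁ a₂ a₃ α (cp * Δx) xj = up xj →
      deriv (iimCubic a₀ a₁ a₂ a₃ α (cp * Δx)) xj = deriv up xj →
      (∀ x ∈ Set.Icc xjm α,
        |um x - iimCubic a₀ a₁ a₂ a₃ α (cm * Δx) x| ≤ C * M * Δx^4 ∧
        |deriv um x - deriv (iimCubic a₀ a₁ a₂ a₃ α (cm * Δx)) x| ≤ C * M * Δx^3) ∧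
      (∀ x ∈ Set.Icc α xj,
        |up x - iimCubic a₀ a₁ a₂ a₃ α (cp * Δx) x| ≤ C * M * Δx^4 ∧
        |deriv up x - deriv (iimCubic a₀ a₁ a₂ a₃ α (cp * Δx)) x| ≤ C * M * Δx^3) := by
  set δ := min cm⁻¹ cp⁻¹
  set K := max cm⁻¹ cp⁻¹
  set A := 200 * (K + 1) ^ 4 / δ ^ 3 * (1 + cm + cp)
  have hδ : 0 < δ := by positivity
  have hA : 0 ≤ A := by positivity
  have hmK : cm⁻¹ ≤ K := le_max_left _ _
  have hpK : cp⁻¹ ≤ K := le_max_right _ _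
  refine ⟨1 + A * (1 + K), by positivity, ?_⟩
  rintro Δx xjm _ α M hΔx rfl hα hM um up hum hup hbm hbp j₀ j₁ j₂ j₃ a₀ a₁ a₂ a₃ i₁ i₂ i₃ i₄
  have e₁ : cp * Δx * deriv up α = cm * Δx * deriv um α := by linear_combination -Δx * j₁
  have e₂ : (cp * Δx) ^ 2 * iteratedDeriv 2 up α = (cm * Δx) ^ 2 * iteratedDeriv 2 um α := by
    linear_combination -Δx ^ 2 * j₂
  have e₃ : (cp * Δx) ^ 3 * iteratedDeriv 3 up α = (cm * Δx) ^ 3 * iteratedDeriv 3 um α := by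
    linear_combination -Δx ^ 3 * j₃
  have hl : xjm ∈ Icc xjm (xjm + Δx) := ⟨le_rfl, by linarith⟩
  have hr : xjm + Δx ∈ Icc xjm (xjm + Δx) := ⟨by linarith, le_rfl⟩
  obtain ⟨hp₁, hp₁'⟩ :=
    abs_iimCubic_le_of_interpolates hum (by positivity) rfl rfl rfl rfl hα hl hbm i₁ i₂
  obtain ⟨hp₂, hp₂'⟩ :=
    abs_iimCubic_le_of_interpolates hup (by positivity) j₀.symm e₁ e₂ e₃ hα hr hbp i₃ i₄
  have hX : 0 ≤ M * Δx ^ 4 := by positivity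
  have hD₀ : M * Δx ^ 4 / 24 ≤ (1 + cm + cp) * (M * Δx ^ 4) := by nlinarith
  have hDm : cm * Δx * (M * Δx ^ 3 / 6) ≤ (1 + cm + cp) * (M * Δx ^ 4) := by nlinarith
  have hDp : cp * Δx * (M * Δx ^ 3 / 6) ≤ (1 + cm + cp) * (M * Δx ^ 4) := by nlinarith
  set p := iimCubic (um α - a₀) (cm * Δx * deriv um α - a₁)
    ((cm * Δx) ^ 2 * iteratedDeriv 2 um α - a₂) ((cm * Δx) ^ 3 * iteratedDeriv 3 um α - a₃) 0 1
  have hp (t : ℝ) (ht : |t| ≤ K) : |p t| ≤ A * (M * Δx ^ 4) ∧ |deriv p t| ≤ A * (M * Δx ^ 4) := by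
    have h := abs_iimCubic_le_of_hermite_data hδ (min_inv_le_sub_div hcm hcp hΔx hα)
      ((abs_div_mul_le_inv hcm hΔx hα hl).trans hmK) ((abs_div_mul_le_inv hcp hΔx hα hr).trans hpK)
      ht (hp₁.trans hD₀) (hp₁'.trans hDm) (hp₂.trans hD₀) (hp₂'.trans hDp)
    rw [← mul_assoc (200 * (K + 1) ^ 4 / δ ^ 3)] at h
    exact h
  exact ⟨fun x hx => abs_sub_iimCubic_le hum hcm hΔx rfl rfl rfl rfl hα ⟨hx.1, hx.2.trans hα.2⟩
      hbm hmK hA hp,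
    fun x hx => abs_sub_iimCubic_le hup hcp hΔx j₀.symm e₁ e₂ e₃ hα ⟨hα.1.trans hx.1, hx.2⟩
      hbp hpK hA hp⟩
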